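/- arXiv:2005.14421 — 7 statements merged into one kernel-verified Lean document; each statement's English description precedes it below -/
import Mathlib

section
/- Let n ≥ 2 and let λ₁ ≥ λ₂ ≥ ⋯ ≥ λₙ be real numbers satisfying ∑_{i=1}^n arctan λᵢ ≥ (n−2)π/2. Then λ₁ + (n−1)λₙ ≥ 0. -/
open Real Metric Finset MeasureTheory Matrix

noncomputable section

abbrev ES (n : ℕ) := EuclideanSpace ℝ (Fin n)

/-- the `i`-th standard basis vector of `ℝⁿ` -/
def evec (n : ℕ) (i : Fin n) : ES n := EuclideanSpace.single i 1

/-- the Hessian matrix `D²u(x)` -/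
def Hess (n : ℕ) (u : ES n → ℝ) (x : ES n) : Matrix (Fin n) (Fin n) ℝ :=
  fun i j => iteratedFDeriv ℝ 2 u x ![evec n i, evec n j]

/-- the inverse `(gⁱʲ)` of the induced metric `g = Iₙ + (D²u)²` -/
def ginv (n : ℕ) (u : ES n → ℝ) (x : ES n) : Matrix (Fin n) (Fin n) ℝ :=
  (1 + Hess n u x * Hess n u x)⁻¹

/-- the determinant `det g` of the induced metric `g = Iₙ + (D²u)²` -/
def detg (n : ℕ) (u : ES n → ℝ) (x : ES n) : ℝ :=
  (1 + Hess n u x * Hess n u x).det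

/-- first partial derivative `∂ᵢ f (x)` -/
def pd1 (n : ℕ) (f : ES n → ℝ) (x : ES n) (i : Fin n) : ℝ :=
  fderiv ℝ f x (evec n i)

/-- second partial derivative `∂ᵢⱼ f (x)` -/
def pd2 (n : ℕ) (f : ES n → ℝ) (x : ES n) (i j : Fin n) : ℝ :=
  iteratedFDeriv ℝ 2 f x ![evec n i, evec n j]

/-- third partial derivative `∂ᵢⱼₖ f (x)` -/
def pd3 (n : ℕ) (f : ES n → ℝ) (x : ES n) (i j k : Fin n) : ℝ :=
  iteratedFDeriv ℝ 3 f x ![evec n i, evec n j, evec n k]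

/-- the Laplace–Beltrami operator of the gradient graph:
`Δ_g f = ∑ gⁱʲ ∂ᵢⱼ f − ∑ gʲᵖ ψ_q u_{pq} ∂ⱼ f` -/
def DeltaG (n : ℕ) (u ψ f : ES n → ℝ) (x : ES n) : ℝ :=
  (∑ i, ∑ j, ginv n u x i j * pd2 n f x i j) -
    ∑ j, ∑ p, ∑ q, ginv n u x j p * pd1 n ψ x q * pd2 n u x p q * pd1 n f x j

/-- the squared gradient `|∇_g f|² = ∑ gⁱʲ ∂ᵢf ∂ⱼf` -/
def gradSq (n : ℕ) (u f : ES n → ℝ) (x : ES n) : ℝ :=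
  ∑ i, ∑ j, ginv n u x i j * pd1 n f x i * pd1 n f x j

/-- the `k`-th elementary symmetric polynomial of `n` real variables -/
def esymmR (n k : ℕ) (lam : Fin n → ℝ) : ℝ :=
  ∑ s ∈ Finset.powersetCard k (Finset.univ : Finset (Fin n)), ∏ i ∈ s, lam i

/-- second-fundamental-form coefficients `h_{ijk}` at a point where `D²u` is diagonal -/
def hcoef (n : ℕ) (u : ES n → ℝ) (lam : Fin n → ℝ) (x : ES n) (i j k : Fin n) : ℝ :=
  Real.sqrt (1 / (1 + lam i ^ 2)) * Real.sqrt (1 / (1 + lam j ^ 2)) *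
    Real.sqrt (1 / (1 + lam k ^ 2)) * pd3 n u x i j k

/-- `lam x` lists the eigenvalues of the Hessian of `u` at every `x ∈ s` -/
def HessEig (n : ℕ) (u : ES n → ℝ) (lam : ES n → Fin n → ℝ) (s : Set (ES n)) : Prop :=
  ∀ x ∈ s, ∃ P : Matrix (Fin n) (Fin n) ℝ, P * Pᵀ = 1 ∧
    Hess n u x = P * Matrix.diagonal (lam x) * Pᵀ

/-! Since `arctan` is concave on `[0, ∞)` and vanishes at `0`, it is subadditive there:
`arctan (k t) ≤ k arctan t` for `k ≥ 1`. Bounding all but the last angle by `arctan λ₁` gives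
`(n - 1)(π/2 - arctan λ₁) ≤ π/2 + arctan λₙ`; when `λₙ < 0` both sides are arccotangents
`arccot x = arctan x⁻¹` of positive numbers, and subadditivity turns this into
`(n - 1)(-λₙ) ≤ λ₁`. -/

theorem Real.concaveOn_arctan_Ici : ConcaveOn ℝ (Set.Ici 0) arctan := by
  refine AntitoneOn.concaveOn_of_deriv (convex_Ici 0) continuous_arctan.continuousOn
    differentiable_arctan.differentiableOn ?_
  rw [interior_Ici, deriv_arctan]
  intro x hx y _ hxy
  dsimp only
  gcongr
  exact le_of_lt hx

theorem Real.arctan_mul_le_mul_arctan {k x : ℝ} (hk : 1 ≤ k) (hx : 0 ≤ x) :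
    arctan (k * x) ≤ k * arctan x := by
  have hk0 : 0 < k := by linarith
  have := concaveOn_arctan_Ici.2 (Set.mem_Ici.2 le_rfl) (Set.mem_Ici.2 (by positivity : 0 ≤ k * x))
    (sub_nonneg.2 (inv_le_one_of_one_le₀ hk)) (inv_nonneg.2 hk0.le) (sub_add_cancel 1 k⁻¹)
  simp only [smul_eq_mul, mul_zero, zero_add, arctan_zero, inv_mul_cancel_left₀ hk0.ne'] at this
  rwa [inv_mul_le_iff₀ hk0] at this

theorem Real.mul_le_of_mul_pi_div_two_sub_arctan_le {k x y : ℝ} (hk : 1 ≤ k) (hx : 0 < x)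
    (hy : 0 < y) (h : k * (π / 2 - arctan x) ≤ π / 2 - arctan y) : k * y ≤ x := by
  rw [← arctan_inv_of_pos hx, ← arctan_inv_of_pos hy] at h
  have : k * x⁻¹ ≤ y⁻¹ :=
    arctan_le_arctan_iff.1 ((arctan_mul_le_mul_arctan hk (inv_nonneg.2 hx.le)).trans h)
  rw [← div_eq_mul_inv, div_le_iff₀ hx, ← div_eq_inv_mul, le_div_iff₀ hy] at this
  linarith

theorem Real.sum_arctan_le {ι : Type*} [Fintype ι] (lam : ι → ℝ) (M : ℝ)
    (hM : ∀ i, lam i ≤ M) (j : ι) :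
    ∑ i, arctan (lam i) ≤ (Fintype.card ι - 1) * arctan M + arctan (lam j) := by
  classical
  rw [← sum_erase_add _ _ (mem_univ j)]
  gcongr
  calc ∑ i ∈ univ.erase j, arctan (lam i) ≤ #(univ.erase j) • arctan M :=
        sum_le_card_nsmul _ _ _ fun i _ => arctan_le_arctan_iff.2 (hM i)
    _ = _ := by
        rw [card_erase_of_mem (mem_univ j), nsmul_eq_mul, card_univ,
          Nat.cast_pred (Fintype.card_pos_iff.2 ⟨j⟩)]

/-- for critical and supercritical phase, `λ₁ + (n-1) λₙ ≥ 0`. -/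
theorem lemma_lambda_one_plus (n : ℕ) (hn : 2 ≤ n) (lam : Fin n → ℝ)
    (hdec : ∀ i j : Fin n, i ≤ j → lam j ≤ lam i)
    (hsum : ((n : ℝ) - 2) * π / 2 ≤ ∑ i, Real.arctan (lam i)) :
    0 ≤ lam ⟨0, by omega⟩ + ((n : ℝ) - 1) * lam ⟨n - 1, by omega⟩ := by
  have hk : (1 : ℝ) ≤ n - 1 := by
    have : (2 : ℝ) ≤ n := by exact_mod_cast hn
    linarith
  have hmax : ∀ i, lam i ≤ lam ⟨0, by omega⟩ := fun i => hdec _ i (Fin.mk_le_mk.2 i.val.zero_le)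
  rcases le_or_gt 0 (lam ⟨n - 1, by omega⟩) with hlast | hlast
  · nlinarith [hmax ⟨n - 1, by omega⟩]
  have hangles : ((n : ℝ) - 2) * π / 2 ≤
      (n - 1) * arctan (lam ⟨0, by omega⟩) + arctan (lam ⟨n - 1, by omega⟩) := by
    simpa using hsum.trans (sum_arctan_le lam _ hmax ⟨n - 1, by omega⟩)
  have hfirst : 0 < lam ⟨0, by omega⟩ := by
    by_contra! hle
    have : (n - 1) * arctan (lam ⟨0, by omega⟩) ≤ 0 :=
      mul_nonpos_of_nonneg_of_nonpos (by linarith) (arctan_le_zero.2 hle)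
    nlinarith [arctan_lt_zero.2 hlast, pi_pos]
  have := mul_le_of_mul_pi_div_two_sub_arctan_le hk hfirst (neg_pos.2 hlast)
    (by rw [arctan_neg]; linarith)
  linarith
end
end

section
/- Let n ≥ 2 and let λ₁ ≥ λ₂ ≥ ⋯ ≥ λₙ be real numbers satisfying ∑_{i=1}^n arctan λᵢ ≥ (n−2)π/2. Then σ_k(λ₁,…,λₙ) ≥ 0 for every k with 1 ≤ k ≤ n−1. -/
open Real Metric Finset MeasureTheory Matrix

noncomputable section

/-! If some `λⱼ = s` is negative, every other `λᵢ` is positive, because the remaining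
angles `arctan λᵢ` are each below `π / 2`. The hypothesis then says that the co-angles
`arctan λᵢ⁻¹` of the positive entries `μ` fit, together with `arctan (-s)`, into `π / 2`.
Absorbing one co-angle at a time into `arctan (-s)` by the addition formula for `arctan`,
induction on `μ` gives `(-s) σₖ(μ) ≤ σₖ₊₁(μ)`, and `σₖ₊₁(λ) = σₖ₊₁(μ) + s σₖ(μ)`.
The critical case, where the co-angles fill `π / 2` exactly, follows from the strict case
by continuity. -/

namespace Multiset

variable {R : Type*}

theorem esymm_cons_succ [CommSemiring R] (a : R) (m : Multiset R) (k : ℕ) :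
    (a ::ₘ m).esymm (k + 1) = m.esymm (k + 1) + a * m.esymm k := by
  simp only [esymm, powersetCard_cons, map_add, sum_add, map_map, Function.comp_def, prod_cons,
    sum_map_mul_left]

@[simp]
theorem esymm_zero [CommSemiring R] (m : Multiset R) : m.esymm 0 = 1 := by
  simp [esymm]

theorem esymm_nonneg [CommSemiring R] [PartialOrder R] [IsOrderedRing R] {m : Multiset R}
    (hm : ∀ x ∈ m, 0 ≤ x) (k : ℕ) : 0 ≤ m.esymm k :=
  sum_nonneg fun _ hx ↦ by
    obtain ⟨t, ht, rfl⟩ := mem_map.mp hx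
    exact prod_nonneg fun y hy ↦ hm y (mem_of_le (mem_powersetCard.mp ht).1 hy)

theorem sum_map_arctan_le (m : Multiset ℝ) : (m.map arctan).sum ≤ card m * (π / 2) := by
  simpa using sum_le_card_nsmul (m.map arctan) (π / 2)
    (by simpa using fun x _ ↦ (arctan_lt_pi_div_two x).le)

theorem sum_map_arctan_inv {m : Multiset ℝ} (hm : ∀ x ∈ m, 0 < x) :
    (m.map fun x ↦ arctan x⁻¹).sum = card m * (π / 2) - (m.map arctan).sum := by
  induction m using Multiset.induction_on with
  | empty => simp
  | cons a m ih =>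
    simp only [forall_mem_cons] at hm
    simp only [map_cons, sum_cons, card_cons, ih hm.2, arctan_inv_of_pos hm.1]
    push_cast
    ring

theorem mul_esymm_le_esymm_succ_of_arctan_lt {m : Multiset ℝ} (hm : ∀ x ∈ m, 0 < x) {t : ℝ}
    (h : arctan t + (m.map fun x ↦ arctan x⁻¹).sum < π / 2) {k : ℕ} (hk : k < card m) :
    t * m.esymm k ≤ m.esymm (k + 1) := by
  induction m using Multiset.induction_on generalizing t k with
  | empty => simp at hk
  | cons a m ih =>
    simp only [forall_mem_cons] at hm
    obtain ⟨ha, hm⟩ := hm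
    have hσ := esymm_nonneg fun x hx ↦ (hm x hx).le
    rw [map_cons, sum_cons] at h
    have hS : 0 ≤ (m.map fun x ↦ arctan x⁻¹).sum :=
      sum_nonneg fun y hy ↦ by
        obtain ⟨x, hx, rfl⟩ := mem_map.mp hy
        exact (arctan_pos.mpr (inv_pos.mpr (hm x hx))).le
    have hta : t < a := by
      rw [← arctan_lt_arctan_iff]
      linarith [arctan_inv_of_pos ha]
    have hmerge : arctan t + arctan a⁻¹ = arctan ((t * a + 1) / (a - t)) := by
      rw [arctan_add (by rwa [← div_eq_mul_inv, div_lt_one ha])]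
      congr 1
      field_simp
    rcases k with _ | j
    · rw [esymm_cons_succ, esymm_zero, esymm_zero]
      linarith [hσ 1]
    · have IH := ih hm (t := (t * a + 1) / (a - t)) (by linarith) (by simpa using hk)
      rw [div_mul_eq_mul_div, div_le_iff₀ (sub_pos.mpr hta)] at IH
      rw [esymm_cons_succ, esymm_cons_succ]
      nlinarith [hσ j, hσ (j + 2)]

theorem mul_esymm_le_esymm_succ_of_arctan_le {m : Multiset ℝ} (hm : ∀ x ∈ m, 0 < x) {t : ℝ}
    (h : arctan t + (m.map fun x ↦ arctan x⁻¹).sum ≤ π / 2) {k : ℕ} (hk : k < card m) :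
    t * m.esymm k ≤ m.esymm (k + 1) := by
  refine le_of_tendsto ((continuous_mul_const _).continuousWithinAt (s := Set.Iio t)).tendsto
    (eventually_nhdsWithin_of_forall fun s (hs : s < t) ↦ ?_)
  exact mul_esymm_le_esymm_succ_of_arctan_lt hm (by linarith [arctan_strictMono hs]) hk

theorem esymm_cons_nonneg_of_arctan {m : Multiset ℝ} (hm : ∀ x ∈ m, 0 < x) {s : ℝ}
    (h : ((card m : ℝ) - 1) * (π / 2) ≤ arctan s + (m.map arctan).sum) {k : ℕ}
    (hk : k ≤ card m) : 0 ≤ (s ::ₘ m).esymm k := by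
  rcases k with _ | j
  · simp
  · have key := mul_esymm_le_esymm_succ_of_arctan_le hm (t := -s)
      (by rw [arctan_neg, sum_map_arctan_inv hm]; linarith) hk
    rw [esymm_cons_succ]
    linarith

theorem esymm_nonneg_of_arctan {m : Multiset ℝ}
    (h : ((card m : ℝ) - 2) * π / 2 ≤ (m.map arctan).sum) {k : ℕ} (hk : k ≤ card m - 1) :
    0 ≤ m.esymm k := by
  by_cases hneg : ∃ s ∈ m, s < 0
  swap
  · push Not at hneg
    exact esymm_nonneg hneg k
  obtain ⟨s, hs, hs0⟩ := hneg
  obtain ⟨m', rfl⟩ := exists_cons_of_mem hs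
  simp only [card_cons, Nat.add_sub_cancel, map_cons, sum_cons] at h hk
  push_cast at h
  refine esymm_cons_nonneg_of_arctan (fun x hx ↦ ?_) (by linarith) hk
  obtain ⟨m'', rfl⟩ := exists_cons_of_mem hx
  have hrest := sum_map_arctan_le m''
  simp only [card_cons, map_cons, sum_cons] at h hrest
  push_cast at h
  have hsx : 0 ≤ arctan s + arctan x := by linarith
  rw [← arctan_pos]
  linarith [arctan_neg s, arctan_pos.mpr (neg_pos.mpr hs0)]

end Multiset

theorem lemma_sigma_nonneg_general (n : ℕ) (lam : Fin n → ℝ)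
    (hsum : ((n : ℝ) - 2) * π / 2 ≤ ∑ i, Real.arctan (lam i)) :
    ∀ k : ℕ, 1 ≤ k → k ≤ n - 1 → 0 ≤ esymmR n k lam := by
  intro k _ hk
  rw [esymmR, ← Finset.esymm_map_val]
  refine Multiset.esymm_nonneg_of_arctan ?_ (by simpa using hk)
  simpa only [Multiset.map_map, Function.comp_def, Finset.sum_map_val, Multiset.card_map,
    Finset.card_val, Finset.card_univ, Fintype.card_fin] using hsum

/-- for critical and supercritical phase, `σ_k(λ) ≥ 0` for `1 ≤ k ≤ n-1`. -/
theorem lemma_sigma_nonneg (n : ℕ) (hn : 2 ≤ n) (lam : Fin n → ℝ)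
    (hdec : ∀ i j : Fin n, i ≤ j → lam j ≤ lam i)
    (hsum : ((n : ℝ) - 2) * π / 2 ≤ ∑ i, Real.arctan (lam i)) :
    ∀ k : ℕ, 1 ≤ k → k ≤ n - 1 → 0 ≤ esymmR n k lam :=
  lemma_sigma_nonneg_general n lam hsum
end
end

section
/- Let u be a smooth function on a neighborhood of x₀ ∈ ℝⁿ such that D²u(x₀) = diag(λ₁,…,λₙ) is diagonal and the eigenvalue λ_γ is distinct from all other eigenvalues of D²u(x₀). Let Λ be a C¹ function on a neighborhood of x₀ such that Λ(x) is an eigenvalue of D²u(x) for every x in that neighborhood and Λ(x₀) = λ_γ, and set b(x) = ln √(1 + Λ(x)²). Then ∑_{k=1}^n g^{kk}(x₀) (∂_k b(x₀))² = ∑_{k=1}^n λ_γ² h_{γγk}². -/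
open Real Metric Finset MeasureTheory Matrix

noncomputable section

/-!
Near `x₀` the function `Λ` is a root of `det (D²u(x) - Λ(x) I)`, so the derivative of this
determinant vanishes at `x₀`. Since `D²u(x₀) - λ_γ I` is diagonal with a single zero entry, at
position `γ`, Jacobi's formula reduces that derivative in direction `e_k` to
`∏_{j ≠ γ} (λ_j - λ_γ) · (∂_k u_{γγ} - ∂_k Λ)`, and as `λ_γ` is simple this gives
`∂_k Λ(x₀) = u_{γγk}(x₀)`. Hence `∂_k b = λ_γ u_{γγk} / (1 + λ_γ²)`, and the formula follows by
expanding `h_{γγk}`.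
-/

open Topology

section ThirdDerivative

variable {E F : Type*} [NormedAddCommGroup E] [NormedSpace ℝ E] [NormedAddCommGroup F]
  [NormedSpace ℝ F] {f : E → F} {x : E}

theorem hasFDerivAt_iteratedFDeriv_two_apply (hf : ContDiffAt ℝ 3 f x) (v w : E) :
    HasFDerivAt (fun y => iteratedFDeriv ℝ 2 f y ![v, w])
      ((fderiv ℝ (iteratedFDeriv ℝ 2 f) x).flipMultilinear ![v, w]) x :=
  (hf.differentiableAt_iteratedFDeriv (by norm_num)).hasFDerivAt.continuousMultilinear_apply_const _

theorem fderiv_iteratedFDeriv_two_apply (hf : ContDiffAt ℝ 3 f x) (u v w : E) :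
    fderiv ℝ (fun y => iteratedFDeriv ℝ 2 f y ![v, w]) x u =
      iteratedFDeriv ℝ 3 f x ![u, v, w] := by
  rw [(hasFDerivAt_iteratedFDeriv_two_apply hf v w).fderiv, iteratedFDeriv_succ_apply_left]
  rfl

theorem iteratedFDeriv_three_swap_left (hf : ContDiffAt ℝ 3 f x) (u v w : E) :
    iteratedFDeriv ℝ 3 f x ![u, v, w] = iteratedFDeriv ℝ 3 f x ![v, u, w] := by
  have hsymm : IsSymmSndFDerivAt ℝ (fderiv ℝ f) x :=
    (hf.fderiv_right (m := 2) (by norm_num)).isSymmSndFDerivAt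
      (by simp [minSmoothness_of_isRCLikeNormedField])
  have := congrArg (fun L => L w) (hsymm.iteratedFDeriv_cons (v := u) (w := v))
  rw [iteratedFDeriv_succ_apply_right (n := 2), iteratedFDeriv_succ_apply_right (n := 2)]
  convert this using 3 <;> first | rfl | (funext i; fin_cases i <;> rfl)

theorem iteratedFDeriv_three_swap_right (hf : ContDiffAt ℝ 3 f x) (u v w : E) :
    iteratedFDeriv ℝ 3 f x ![u, v, w] = iteratedFDeriv ℝ 3 f x ![u, w, v] := by
  have hsymm_near : (fun y => iteratedFDeriv ℝ 2 f y ![v, w]) =ᶠ[𝓝 x]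
      fun y => iteratedFDeriv ℝ 2 f y ![w, v] := by
    filter_upwards [hf.eventually (by simp)] with y hy
    exact (hy.isSymmSndFDerivAt
      (by simp only [minSmoothness_of_isRCLikeNormedField]; norm_num)).iteratedFDeriv_cons
  rw [← fderiv_iteratedFDeriv_two_apply hf, ← fderiv_iteratedFDeriv_two_apply hf,
    hsymm_near.fderiv_eq]

end ThirdDerivative

section DeterminantDerivative

variable {𝕜 ι E : Type*} [NontriviallyNormedField 𝕜] [Fintype ι] [DecidableEq ι]
  [NormedAddCommGroup E] [NormedSpace 𝕜 E] {x : E}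

theorem prod_erase_diagonal_perm_eq_zero (d : ι → 𝕜) {σ : Equiv.Perm ι} (hσ : σ ≠ 1) (i : ι) :
    ∏ j ∈ univ.erase i, diagonal d (σ j) j = 0 := by
  obtain ⟨a, ha⟩ : ∃ a, σ a ≠ a := not_forall.1 fun h => hσ (Equiv.ext h)
  -- if `a = i` is the erased index, the factor at `σ a` still vanishes as `σ (σ a) ≠ σ a`
  rcases eq_or_ne a i with rfl | hai
  · exact prod_eq_zero (mem_erase.2 ⟨ha, mem_univ _⟩)
      (diagonal_apply_ne d fun h => ha (σ.injective h))
  · exact prod_eq_zero (mem_erase.2 ⟨hai, mem_univ _⟩) (diagonal_apply_ne d ha)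

theorem hasFDerivAt_det_of_eq_diagonal {M : E → Matrix ι ι 𝕜} {M' : ι → ι → E →L[𝕜] 𝕜}
    {d : ι → 𝕜} (hM : ∀ i j, HasFDerivAt (fun y => M y i j) (M' i j) x)
    (hd : M x = diagonal d) :
    HasFDerivAt (fun y => (M y).det) (∑ i, (∏ j ∈ univ.erase i, d j) • M' i i) x := by
  have hLeibniz : HasFDerivAt (fun y => ∑ σ : Equiv.Perm ι, (σ.sign : 𝕜) * ∏ i, M y (σ i) i)
      (∑ σ : Equiv.Perm ι, (σ.sign : 𝕜) • ∑ i, (∏ j ∈ univ.erase i, M x (σ j) j) • M' (σ i) i) x :=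
    HasFDerivAt.fun_sum fun σ _ => (HasFDerivAt.finsetProd fun i _ => hM (σ i) i).const_mul _
  simp only [← det_apply'] at hLeibniz
  convert hLeibniz using 1
  rw [sum_eq_single (1 : Equiv.Perm ι)]
  · simp [hd]
  · intro σ _ hσ
    refine smul_eq_zero_of_right _ (sum_eq_zero fun i _ => ?_)
    rw [hd, prod_erase_diagonal_perm_eq_zero d hσ i]
    exact zero_smul 𝕜 (M' (σ i) i)
  · simp

theorem HasFDerivAt.eq_fderiv_diag_of_simple_eigenvalue {M : E → Matrix ι ι 𝕜}
    {M' : ι → ι → E →L[𝕜] 𝕜} {Λ : E → 𝕜} {Λ' : E →L[𝕜] 𝕜} {d : ι → 𝕜} {γ : ι}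
    (hΛ : HasFDerivAt Λ Λ' x) (hM : ∀ i j, HasFDerivAt (fun y => M y i j) (M' i j) x)
    (hd : M x = diagonal d) (hsimple : ∀ k, k ≠ γ → d k ≠ d γ) (hΛx : Λ x = d γ)
    (heig : ∀ᶠ y in 𝓝 x, ∃ v : ι → 𝕜, v ≠ 0 ∧ M y *ᵥ v = Λ y • v) :
    Λ' = M' γ γ := by
  set N : E → Matrix ι ι 𝕜 := fun y => M y - Λ y • 1
  have hN : ∀ i j, HasFDerivAt (fun y => N y i j) (M' i j - if i = j then Λ' else 0) x := by
    intro i j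
    by_cases hij : i = j
    · simpa [N, hij] using (hM j j).fun_sub hΛ
    · simpa [N, hij] using hM i j
  have hNx : N x = diagonal fun i => d i - d γ := by
    ext i j
    by_cases hij : i = j <;> simp [N, hd, hΛx, hij]
  have hdet_zero : HasFDerivAt (fun y => (N y).det) (0 : E →L[𝕜] 𝕜) x := by
    refine (hasFDerivAt_const (0 : 𝕜) x).congr_of_eventuallyEq ?_
    filter_upwards [heig] with y ⟨v, hv, hMv⟩
    refine exists_mulVec_eq_zero_iff.1 ⟨v, hv, ?_⟩
    simp [N, sub_mulVec, hMv, smul_mulVec]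
  have hsum := (hasFDerivAt_det_of_eq_diagonal hN hNx).unique hdet_zero
  rw [sum_eq_single γ (fun i _ hi => by
    rw [prod_eq_zero (mem_erase.2 ⟨Ne.symm hi, mem_univ γ⟩) (sub_self (d γ))]
    exact zero_smul 𝕜 (_ : E →L[𝕜] 𝕜)) (by simp), if_pos rfl] at hsum
  have hc : ∏ j ∈ univ.erase γ, (d j - d γ) ≠ 0 :=
    prod_ne_zero_iff.2 fun j hj => sub_ne_zero.2 (hsimple j (mem_erase.1 hj).1)
  exact (sub_eq_zero.1 ((smul_eq_zero.1 hsum).resolve_left hc)).symm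

end DeterminantDerivative

theorem HasFDerivAt.log_sqrt_one_add_sq {E : Type*} [NormedAddCommGroup E] [NormedSpace ℝ E]
    {f : E → ℝ} {f' : E →L[ℝ] ℝ} {x : E} (hf : HasFDerivAt f f' x) :
    HasFDerivAt (fun y => Real.log (√(1 + f y ^ 2))) ((f x / (1 + f x ^ 2)) • f') x := by
  have hpos : ∀ y, 0 < 1 + f y ^ 2 := fun y => by positivity
  have hlog := (((hf.pow 2).const_add 1).log (hpos x).ne').const_mul (1 / 2 : ℝ)
  have hfun : (fun y => Real.log (√(1 + f y ^ 2))) = fun y => 1 / 2 * Real.log (1 + f y ^ 2) :=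
    funext fun y => by rw [Real.log_sqrt (hpos y).le]; ring
  rw [hfun]
  refine hlog.congr_fderiv ?_
  ext v
  simp only [_root_.smul_apply, smul_eq_mul, nsmul_eq_mul]
  field_simp
  norm_num

theorem hcoef_sq (n : ℕ) (u : ES n → ℝ) (lam : Fin n → ℝ) (x : ES n) (i j k : Fin n) :
    hcoef n u lam x i j k ^ 2 =
      pd3 n u x i j k ^ 2 / ((1 + lam i ^ 2) * (1 + lam j ^ 2) * (1 + lam k ^ 2)) := by
  have hsq : ∀ a : ℝ, √(1 / (1 + a ^ 2)) ^ 2 = 1 / (1 + a ^ 2) :=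
    fun a => sq_sqrt (by positivity)
  rw [hcoef, mul_pow, mul_pow, mul_pow, hsq, hsq, hsq]
  field_simp

theorem differentiableAt_hess_apply {n : ℕ} {u : ES n → ℝ} {x : ES n}
    (hu : ContDiffAt ℝ 3 u x) (i j : Fin n) : DifferentiableAt ℝ (fun y => Hess n u y i j) x :=
  (hasFDerivAt_iteratedFDeriv_two_apply hu (evec n i) (evec n j)).differentiableAt

theorem pd1_hess_apply {n : ℕ} {u : ES n → ℝ} {x : ES n} (hu : ContDiffAt ℝ 3 u x)
    (i j k : Fin n) : pd1 n (fun y => Hess n u y i j) x k = pd3 n u x i j k := by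
  rw [pd1, pd3, iteratedFDeriv_three_swap_right hu, iteratedFDeriv_three_swap_left hu]
  exact fderiv_iteratedFDeriv_two_apply hu _ _ _

/-- gradient formula `|∇_g b|² = ∑ₖ λ_γ² h_{γγk}²` for
`b = ln √(1 + λ_γ²)` at a diagonalization point with a simple eigenvalue. -/
theorem grad_b_formula (n : ℕ) (Ω : Set (ES n)) (hΩ : IsOpen Ω) (x₀ : ES n) (hx₀ : x₀ ∈ Ω)
    (u : ES n → ℝ) (hu : ContDiffOn ℝ (⊤ : ℕ∞) u Ω)
    (lam : Fin n → ℝ) (hdiag : Hess n u x₀ = Matrix.diagonal lam)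
    (γ : Fin n) (hdist : ∀ k : Fin n, k ≠ γ → lam k ≠ lam γ)
    (Λ : ES n → ℝ) (hΛ : ContDiffAt ℝ 1 Λ x₀)
    (hΛeig : ∀ᶠ x in nhds x₀, ∃ v : Fin n → ℝ, v ≠ 0 ∧ Hess n u x *ᵥ v = Λ x • v)
    (hΛ₀ : Λ x₀ = lam γ)
    (b : ES n → ℝ) (hb : b = fun x => Real.log (Real.sqrt (1 + Λ x ^ 2))) :
    ∑ k, (1 / (1 + lam k ^ 2)) * (pd1 n b x₀ k) ^ 2 =
      ∑ k, lam γ ^ 2 * (hcoef n u lam x₀ γ γ k) ^ 2 := by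
  have hu₀ : ContDiffAt ℝ 3 u x₀ := (hu.contDiffAt (hΩ.mem_nhds hx₀)).of_le (by norm_cast)
  have hΛd : HasFDerivAt Λ (fderiv ℝ Λ x₀) x₀ := (hΛ.differentiableAt one_ne_zero).hasFDerivAt
  have hΛ' : fderiv ℝ Λ x₀ = fderiv ℝ (fun y => Hess n u y γ γ) x₀ :=
    hΛd.eq_fderiv_diag_of_simple_eigenvalue
      (fun i j => (differentiableAt_hess_apply hu₀ i j).hasFDerivAt) hdiag hdist hΛ₀ hΛeig
  have hpd1_b : ∀ k, pd1 n b x₀ k = lam γ / (1 + lam γ ^ 2) * pd3 n u x₀ γ γ k := by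
    intro k
    rw [← pd1_hess_apply hu₀, pd1, pd1, ← hΛ', hb, hΛd.log_sqrt_one_add_sq.fderiv, hΛ₀]
    rfl
  refine sum_congr rfl fun k _ => ?_
  rw [hpd1_b, hcoef_sq]
  field_simp
end
end

section
/- Let m and n be integers with 1 ≤ m ≤ n and n ≥ 2, and let ε be a real number with 0 < ε ≤ 2 − m/n − √((1 − m/n)² + 4/n). Then ε < 1 and 1/(1−ε) + (m−1)/(3−ε) ≤ n/2. -/
open Real Metric Finset MeasureTheory Matrix

noncomputable section

/-! Writing `a = 1 - ε` and `b = 1 - m/n`, the hypothesis on `ε` says `√(b² + 4/n) ≤ a + b`.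
Squaring gives `n a² + 2a(n - m) ≥ 4`, which after clearing the denominators `a (2 + a)` is exactly
the inequality `1/a + (m - 1)/(2 + a) ≤ n/2`; positivity of `a` comes from `√(b² + 4/n) > |b|`. -/

theorem pos_and_le_sq_add_of_sqrt_le {a b c : ℝ} (hc : 0 < c) (h : √(b ^ 2 + c) ≤ a + b) :
    0 < a ∧ c ≤ a ^ 2 + 2 * a * b := by
  have hb : |b| < √(b ^ 2 + c) := by
    rw [Real.lt_sqrt (abs_nonneg b), sq_abs]
    linarith
  obtain ⟨-, hsq⟩ := Real.sqrt_le_iff.mp h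
  exact ⟨by linarith [le_abs_self b], by linarith⟩

theorem one_div_add_div_two_add_le_iff {a m n : ℝ} (ha : 0 < a) :
    1 / a + (m - 1) / (2 + a) ≤ n / 2 ↔ 4 ≤ n * a ^ 2 + 2 * a * (n - m) := by
  rw [div_add_div _ _ ha.ne' (by positivity), div_le_div_iff₀ (by positivity) two_pos]
  constructor <;> intro h <;> linarith

theorem epsilon_choice_general (m n : ℕ) (hn : 2 ≤ n) (ε : ℝ)
    (hε : ε ≤ 2 - (m : ℝ) / n - Real.sqrt ((1 - (m : ℝ) / n) ^ 2 + 4 / n)) :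
    ε < 1 ∧ 1 / (1 - ε) + ((m : ℝ) - 1) / (3 - ε) ≤ (n : ℝ) / 2 := by
  have hn0 : (0 : ℝ) < n := by positivity
  obtain ⟨hpos, hquad⟩ := pos_and_le_sq_add_of_sqrt_le (a := 1 - ε) (b := 1 - m / n)
    (by positivity : 0 < 4 / (n : ℝ)) (by linarith)
  refine ⟨by linarith, ?_⟩
  rw [show 3 - ε = 2 + (1 - ε) by ring, one_div_add_div_two_add_le_iff hpos]
  have hscale : n * ((1 - ε) ^ 2 + 2 * (1 - ε) * (1 - m / n)) =
      n * (1 - ε) ^ 2 + 2 * (1 - ε) * (n - m) := by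
    field_simp
  calc (4 : ℝ) = n * (4 / n) := by field_simp
    _ ≤ _ := by gcongr
    _ = _ := hscale

/-- the elementary inequality used to fix the Jacobi constant `ε(n)`. -/
theorem epsilon_choice (m n : ℕ) (hm : 1 ≤ m) (hmn : m ≤ n) (hn : 2 ≤ n) (ε : ℝ)
    (hε0 : 0 < ε)
    (hε : ε ≤ 2 - (m : ℝ) / n - Real.sqrt ((1 - (m : ℝ) / n) ^ 2 + 4 / n)) :
    ε < 1 ∧ 1 / (1 - ε) + ((m : ℝ) - 1) / (3 - ε) ≤ (n : ℝ) / 2 :=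
  epsilon_choice_general m n hn ε hε
end
end

section
/- For any real numbers λ₁, …, λₙ (n ≥ 1), writing V = ∏_{j=1}^n √(1+λⱼ²) and ψ = ∑_{j=1}^n arctan λⱼ, one has ∑_{i=1}^n V/(1+λᵢ²) = cos ψ · ∑_{1 ≤ 2k+1 ≤ n} (−1)^k (n−2k) σ_{2k}(λ) − sin ψ · ∑_{0 ≤ 2k ≤ n} (−1)^k (n−2k+1) σ_{2k−1}(λ). -/
open Real Metric Finset MeasureTheory Matrix

noncomputable section

/-!
Write `1 + iλⱼ = √(1 + λⱼ²) e^{i arctan λⱼ}`. Then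
`e^{iψ} ∏_{j ≠ i} (1 − iλⱼ) = V (1 + iλᵢ)/(1 + λᵢ²)`, whose real part is the `i`-th summand
on the left. On the other hand `∑ᵢ ∏_{j ≠ i} (1 + cⱼ) = ∑ₖ (n − k) σₖ(c)`, and for `cⱼ = −iλⱼ`
we have `σₖ(c) = (−i)ᵏ σₖ(λ)`: the even `k` give a real part `A` and the odd `k` an imaginary
part `B`, so the left side is `Re (e^{iψ} (A + iB)) = A cos ψ − B sin ψ`.
-/

namespace Finset

theorem sum_range_eq_sum_even_add_sum_odd {M : Type*} [AddCommMonoid M] (f : ℕ → M) (n : ℕ) :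
    ∑ k ∈ range n, f k =
      ∑ m ∈ range ((n + 1) / 2), f (2 * m) + ∑ m ∈ range (n / 2), f (2 * m + 1) := by
  induction n with
  | zero => simp
  | succ n ih =>
    obtain ⟨m, rfl | rfl⟩ := Nat.even_or_odd' n
    · rw [show (2 * m + 1 + 1) / 2 = m + 1 by omega, show (2 * m + 1) / 2 = m by omega,
        sum_range_succ, sum_range_succ, ih, show (2 * m + 1) / 2 = m by omega,
        show 2 * m / 2 = m by omega]
      abel
    · rw [show (2 * m + 1 + 1 + 1) / 2 = m + 1 by omega, show (2 * m + 1 + 1) / 2 = m + 1 by omega,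
        sum_range_succ, sum_range_succ (fun m => f (2 * m + 1)), ih,
        show (2 * m + 1 + 1) / 2 = m + 1 by omega, show (2 * m + 1) / 2 = m by omega]
      abel

theorem sum_prod_erase_one_add {ι R : Type*} [Fintype ι] [DecidableEq ι] [CommSemiring R]
    (c : ι → R) :
    ∑ i, ∏ j ∈ univ.erase i, (1 + c j) =
      ∑ k ∈ range (Fintype.card ι),
        (Fintype.card ι - k) • ∑ s ∈ powersetCard k univ, ∏ j ∈ s, c j := by
  have hcount (s : Finset ι) : ∑ i, (if i ∉ s then ∏ j ∈ s, c j else 0) =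
      (Fintype.card ι - #s) • ∏ j ∈ s, c j := by
    rw [sum_ite, sum_const_zero, add_zero, sum_const, filter_not, filter_mem_eq_inter,
      univ_inter, ← compl_eq_univ_sdiff, card_compl]
  calc ∑ i, ∏ j ∈ univ.erase i, (1 + c j)
      = ∑ s, (Fintype.card ι - #s) • ∏ j ∈ s, c j := by
        have hpow (i : ι) : (univ.erase i).powerset = univ.filter (i ∉ ·) := by
          ext s; simp [subset_erase]
        simp_rw [prod_one_add, hpow, sum_filter, ← hcount]
        exact sum_comm
    _ = ∑ k ∈ range (Fintype.card ι + 1),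
          (Fintype.card ι - k) • ∑ s ∈ powersetCard k univ, ∏ j ∈ s, c j := by
        rw [← powerset_univ, sum_powerset, card_univ]
        refine sum_congr rfl fun k _ => ?_
        rw [smul_sum]
        exact sum_congr rfl fun s hs => by rw [(mem_powersetCard.mp hs).2]
    _ = _ := by rw [sum_range_succ, Nat.sub_self, zero_smul, add_zero]

end Finset

namespace Complex

theorem exp_arctan_mul_I_mul_one_sub_mul_I (a : ℝ) :
    exp (Real.arctan a * I) * (1 - a * I) = (√(1 + a ^ 2) : ℝ) := by
  have hsqrt : √(1 + a ^ 2) ≠ 0 := by positivity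
  rw [exp_mul_I, ← ofReal_cos, ← ofReal_sin, Real.cos_arctan, Real.sin_arctan]
  push_cast
  field_simp
  rw [div_eq_iff (ofReal_ne_zero.mpr hsqrt), ← ofReal_mul, Real.mul_self_sqrt (by positivity)]
  push_cast
  linear_combination (-a ^ 2 : ℂ) * I_sq

theorem exp_mul_prod_one_sub_mul_I {ι : Type*} (lam : ι → ℝ) (s : Finset ι) :
    exp ((∑ j ∈ s, Real.arctan (lam j) : ℝ) * I) * ∏ j ∈ s, (1 - lam j * I) =
      (∏ j ∈ s, √(1 + lam j ^ 2) : ℝ) := by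
  rw [ofReal_prod, ofReal_sum, sum_mul, exp_sum, ← prod_mul_distrib]
  exact prod_congr rfl fun j _ => exp_arctan_mul_I_mul_one_sub_mul_I (lam j)

theorem exp_mul_prod_erase_one_sub_mul_I {ι : Type*} [DecidableEq ι] (lam : ι → ℝ)
    {s : Finset ι} {i : ι} (hi : i ∈ s) :
    exp ((∑ j ∈ s, Real.arctan (lam j) : ℝ) * I) * ∏ j ∈ s.erase i, (1 - lam j * I) =
      ((∏ j ∈ s, √(1 + lam j ^ 2)) / (1 + lam i ^ 2) : ℝ) * (1 + lam i * I) := by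
  have hprod := exp_mul_prod_one_sub_mul_I lam s
  rw [← mul_prod_erase s _ hi] at hprod
  have hpos : ((1 + lam i ^ 2 : ℝ) : ℂ) ≠ 0 := ofReal_ne_zero.mpr (by positivity)
  rw [ofReal_div, div_mul_eq_mul_div, eq_div_iff hpos, ← hprod, ofReal_add, ofReal_one,
    ofReal_pow]
  linear_combination
    exp ((∑ j ∈ s, Real.arctan (lam j) : ℝ) * I) * (∏ j ∈ s.erase i, (1 - lam j * I)) *
      (lam i : ℂ) ^ 2 * I_sq

end Complex

open Complex in
theorem sum_prod_erase_one_sub_mul_I (n : ℕ) (lam : Fin n → ℝ) :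
    ∑ i, ∏ j ∈ univ.erase i, (1 - lam j * I) =
      ((∑ k ∈ range ((n + 1) / 2),
          (-1 : ℝ) ^ k * ((n : ℝ) - 2 * k) * esymmR n (2 * k) lam : ℝ) : ℂ) +
        ((∑ k ∈ range (n / 2 + 1), (-1 : ℝ) ^ k * ((n : ℝ) - 2 * k + 1) *
            (if k = 0 then 0 else esymmR n (2 * k - 1) lam) : ℝ) : ℂ) * I := by
  have hesymm (k : ℕ) : ∑ s ∈ powersetCard k univ, ∏ j ∈ s, ((lam j : ℂ) * -I) =
      (-I) ^ k * (esymmR n k lam : ℂ) := by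
    rw [esymmR, ofReal_sum, mul_sum]
    refine sum_congr rfl fun s hs => ?_
    rw [prod_mul_distrib, prod_const, (mem_powersetCard.mp hs).2, ofReal_prod, mul_comm]
  have hI (m : ℕ) : (-I) ^ (2 * m) = (-1) ^ m := by rw [pow_mul, neg_sq, I_sq]
  simp_rw [sub_eq_add_neg (1 : ℂ), ← mul_neg]
  -- `sum_range_succ'` shifts `k = m + 1` on the right, turning `σ_{2k-1}` into `σ_{2m+1}`.
  rw [sum_prod_erase_one_add, Fintype.card_fin, sum_range_eq_sum_even_add_sum_odd,
    sum_range_succ' _ (n / 2)]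
  simp only [hesymm]
  push_cast
  rw [pow_zero, mul_zero, add_zero, sum_mul]
  congr 1
  · refine sum_congr rfl fun m hm => ?_
    have hle : 2 * m ≤ n := by have := mem_range.mp hm; omega
    rw [nsmul_eq_mul, Nat.cast_sub hle, hI]
    push_cast
    ring
  · refine sum_congr rfl fun m hm => ?_
    have hle : 2 * m + 1 ≤ n := by have := mem_range.mp hm; omega
    rw [nsmul_eq_mul, Nat.cast_sub hle, pow_succ, hI, show 2 * (m + 1) - 1 = 2 * m + 1 by omega]
    push_cast
    ring

theorem trace_conformality_general (n : ℕ) (lam : Fin n → ℝ) :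
    ∑ i, (∏ j, Real.sqrt (1 + lam j ^ 2)) / (1 + lam i ^ 2) =
      Real.cos (∑ j, Real.arctan (lam j)) *
          (∑ k ∈ Finset.range ((n + 1) / 2),
            (-1 : ℝ) ^ k * ((n : ℝ) - 2 * k) * esymmR n (2 * k) lam) -
        Real.sin (∑ j, Real.arctan (lam j)) *
          (∑ k ∈ Finset.range (n / 2 + 1),
            (-1 : ℝ) ^ k * ((n : ℝ) - 2 * k + 1) *
              (if k = 0 then 0 else esymmR n (2 * k - 1) lam)) := by
  set ψ := ∑ j, Real.arctan (lam j)
  have hterm (i : Fin n) :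
      (Complex.exp (ψ * Complex.I) * ∏ j ∈ univ.erase i, (1 - lam j * Complex.I)).re =
        (∏ j, √(1 + lam j ^ 2)) / (1 + lam i ^ 2) := by
    rw [Complex.exp_mul_prod_erase_one_sub_mul_I lam (mem_univ i), Complex.re_ofReal_mul]
    simp
  calc ∑ i, (∏ j, √(1 + lam j ^ 2)) / (1 + lam i ^ 2)
      = (Complex.exp (ψ * Complex.I) * ∑ i, ∏ j ∈ univ.erase i, (1 - lam j * Complex.I)).re := by
        simp only [mul_sum, Complex.re_sum, hterm]
    _ = _ := by
        rw [sum_prod_erase_one_sub_mul_I, Complex.exp_mul_I, ← Complex.ofReal_cos,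
          ← Complex.ofReal_sin]
        simp only [Complex.mul_re, Complex.mul_im, Complex.add_re, Complex.add_im,
          Complex.ofReal_re, Complex.ofReal_im, Complex.I_re, Complex.I_im]
        ring

/-- the trace of the conformality identity:
`∑ᵢ V/(1+λᵢ²) = cos ψ ∑ (−1)^k (n−2k) σ_{2k} − sin ψ ∑ (−1)^k (n−2k+1) σ_{2k−1}`. -/
theorem trace_conformality (n : ℕ) (hn : 1 ≤ n) (lam : Fin n → ℝ) :
    ∑ i, (∏ j, Real.sqrt (1 + lam j ^ 2)) / (1 + lam i ^ 2) =
      Real.cos (∑ j, Real.arctan (lam j)) *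
          (∑ k ∈ Finset.range ((n + 1) / 2),
            (-1 : ℝ) ^ k * ((n : ℝ) - 2 * k) * esymmR n (2 * k) lam) -
        Real.sin (∑ j, Real.arctan (lam j)) *
          (∑ k ∈ Finset.range (n / 2 + 1),
            (-1 : ℝ) ^ k * ((n : ℝ) - 2 * k + 1) *
              (if k = 0 then 0 else esymmR n (2 * k - 1) lam)) :=
  trace_conformality_general n lam
end
end

section
/- Let A be a C² map from an open interval around 0 into the n×n real symmetric matrices such that A(0) = diag(λ₁,…,λₙ) is diagonal and λ₁ is a simple eigenvalue of A(0) (λ₁ ≠ λ_k for all k ≥ 2). Let Λ be a C² real-valued function on a neighborhood of 0 such that Λ(t) is an eigenvalue of A(t) for every t and Λ(0) = λ₁. Then Λ'(0) = A'(0)₁₁ and Λ''(0) = A''(0)₁₁ + 2 ∑_{k=2}^n (A'(0)_{1k})² / (λ₁ − λ_k). -/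
/-! Put `B(t) = A(t) - Λ(t) I`. Its block `D(t)` on the indices `k ≥ 2` is `diag(λ_k - λ₁)` at
`t = 0`, hence invertible near `0`, and then a null vector of `B(t)` forces the Schur complement
of `D(t)` to vanish: `A(t)₁₁ - Λ(t) = r(t)ᵀ D(t)⁻¹ c(t)`, where `r` and `c` are the off-diagonal
parts of the first row and column. Since `r(0) = c(0) = 0`, the right-hand side is
`t² r'(0)ᵀ D(0)⁻¹ c'(0) + o(t²)`; comparing with the Taylor expansion of the `C²` function
`A₁₁ - Λ` gives both formulas. -/

open Real Metric Finset MeasureTheory Matrix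

noncomputable section

open Filter Topology

theorem deriv_eq_zero_and_iteratedDeriv_two_eq_of_tendsto_div_sq {g : ℝ → ℝ} {ε c : ℝ}
    (hε : 0 < ε) (hg : ContDiffOn ℝ 2 g (ball 0 ε))
    (h : Tendsto (fun t => g t / t ^ 2) (𝓝[≠] 0) (𝓝 c)) :
    deriv g 0 = 0 ∧ iteratedDeriv 2 g 0 = 2 * c := by
  have hslope : Tendsto (fun t => t * (g t / t ^ 2)) (𝓝[≠] 0) (𝓝 0) := by
    simpa using (tendsto_id.mono_left nhdsWithin_le_nhds).mul h
  have hg0 : g 0 = 0 := by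
    have hsq : Tendsto (fun t => t * (t * (g t / t ^ 2))) (𝓝[≠] 0) (𝓝 0) := by
      simpa using (tendsto_id.mono_left nhdsWithin_le_nhds).mul hslope
    have hcont := (hg.continuousOn.continuousAt (ball_mem_nhds 0 hε)).tendsto
    refine tendsto_nhds_unique (hcont.mono_left nhdsWithin_le_nhds) (hsq.congr' ?_)
    filter_upwards [self_mem_nhdsWithin] with t (ht : t ≠ 0)
    field_simp
  have hderiv : HasDerivAt g 0 0 := by
    rw [hasDerivAt_iff_tendsto_slope]
    refine hslope.congr' ?_
    filter_upwards [self_mem_nhdsWithin] with t (ht : t ≠ 0)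
    rw [slope_def_field, hg0]
    field_simp
    ring
  refine ⟨hderiv.deriv, ?_⟩
  have htaylor := Real.taylor_tendsto (convex_ball (0 : ℝ) ε) (mem_ball_self hε) hg
  have hiter : ∀ k, iteratedDerivWithin k g (ball 0 ε) 0 = iteratedDeriv k g 0 := fun k =>
    iteratedDerivWithin_of_isOpen isOpen_ball (mem_ball_self hε)
  simp only [taylor_within_apply, Finset.sum_range_succ, Finset.sum_range_zero, hiter,
    iteratedDeriv_zero, iteratedDeriv_one, hg0, hderiv.deriv, isOpen_ball.nhdsWithin_eq
    (mem_ball_self hε)] at htaylor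
  have hquad : Tendsto (fun t => g t / t ^ 2) (𝓝[≠] 0) (𝓝 (iteratedDeriv 2 g 0 / 2)) := by
    have := (htaylor.mono_left (nhdsWithin_le_nhds (s := {0}ᶜ))).add_const (iteratedDeriv 2 g 0 / 2)
    rw [zero_add] at this
    refine this.congr' ?_
    filter_upwards [self_mem_nhdsWithin] with t (ht : t ≠ 0)
    simp [field]
  linarith [tendsto_nhds_unique h hquad]

theorem Matrix.apply_zero_zero_eq_of_mulVec_eq_zero {R : Type*} [Field R] {m : ℕ}
    {B : Matrix (Fin (m + 1)) (Fin (m + 1)) R} (hD : IsUnit (B.submatrix Fin.succ Fin.succ).det)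
    {v : Fin (m + 1) → R} (hv : v ≠ 0) (hBv : B *ᵥ v = 0) :
    B 0 0 = (fun k => B 0 k.succ) ⬝ᵥ (B.submatrix Fin.succ Fin.succ)⁻¹ *ᵥ fun k => B k.succ 0 := by
  set D := B.submatrix Fin.succ Fin.succ
  set row : Fin m → R := fun k => B 0 k.succ
  set col : Fin m → R := fun k => B k.succ 0
  have hrow : B 0 0 * v 0 + row ⬝ᵥ Fin.tail v = 0 := by
    simpa [row, mulVec, dotProduct, Fin.sum_univ_succ, Fin.tail] using congrFun hBv 0
  have hcol : D *ᵥ Fin.tail v = -v 0 • col := by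
    ext i
    have := congrFun hBv i.succ
    simp only [mulVec, dotProduct, Fin.sum_univ_succ, Pi.zero_apply] at this
    simp only [D, col, mulVec, dotProduct, submatrix_apply, Fin.tail, Pi.smul_apply, smul_eq_mul]
    linear_combination this
  have htail : Fin.tail v = -v 0 • D⁻¹ *ᵥ col := by
    rw [← mulVec_smul, ← hcol, mulVec_mulVec, nonsing_inv_mul _ hD, one_mulVec]
  have hv0 : v 0 ≠ 0 := by
    intro h0
    refine hv (funext fun i => Fin.cases h0 (fun j => ?_) i)
    simpa [h0, Fin.tail] using congrFun htail j
  rw [htail, dotProduct_smul, smul_eq_mul] at hrow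
  exact mul_right_cancel₀ hv0 (by linear_combination hrow)

theorem tendsto_dotProduct_mulVec_div_sq {ι : Type*} [Fintype ι] {r s : ℝ → ι → ℝ}
    {M : ℝ → Matrix ι ι ℝ} {r' s' : ι → ℝ} (hr : HasDerivAt r r' 0) (hs : HasDerivAt s s' 0)
    (hr0 : r 0 = 0) (hs0 : s 0 = 0) (hM : ContinuousAt M 0) :
    Tendsto (fun t => r t ⬝ᵥ M t *ᵥ s t / t ^ 2) (𝓝[≠] 0) (𝓝 (r' ⬝ᵥ M 0 *ᵥ s')) := by
  have hform : Continuous fun p : (ι → ℝ) × Matrix ι ι ℝ × (ι → ℝ) => p.1 ⬝ᵥ p.2.1 *ᵥ p.2.2 :=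
    continuous_fst.dotProduct (continuous_snd.fst.matrix_mulVec continuous_snd.snd)
  have hslopes := (hasDerivAt_iff_tendsto_slope.1 hr).prodMk_nhds <|
    (hM.tendsto.mono_left nhdsWithin_le_nhds).prodMk_nhds (hasDerivAt_iff_tendsto_slope.1 hs)
  refine ((hform.tendsto _).comp hslopes).congr' ?_
  filter_upwards [self_mem_nhdsWithin] with t (ht : t ≠ 0)
  simp only [Function.comp_apply, slope_def_module, hr0, hs0, sub_zero, smul_dotProduct,
    mulVec_smul, dotProduct_smul, smul_eq_mul]
  field_simp

theorem tendsto_apply_zero_zero_sub_eigenvalue_div_sq {m : ℕ}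
    {A : ℝ → Matrix (Fin (m + 1)) (Fin (m + 1)) ℝ}
    (hA : ∀ i j, DifferentiableAt ℝ (fun t => A t i j) 0)
    {lam : Fin (m + 1) → ℝ} (hA0 : A 0 = diagonal lam) (hsimple : ∀ k : Fin m, lam k.succ ≠ lam 0)
    {Λ : ℝ → ℝ} (hΛ : ContinuousAt Λ 0)
    (hΛeig : ∀ᶠ t in 𝓝 0, ∃ v, v ≠ 0 ∧ A t *ᵥ v = Λ t • v) (hΛ0 : Λ 0 = lam 0) :
    Tendsto (fun t => (A t 0 0 - Λ t) / t ^ 2) (𝓝[≠] 0)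
      (𝓝 (∑ k : Fin m, deriv (fun t => A t 0 k.succ) 0 * deriv (fun t => A t k.succ 0) 0 /
        (lam k.succ - lam 0))) := by
  set D : ℝ → Matrix (Fin m) (Fin m) ℝ := fun t => (A t - Λ t • 1).submatrix Fin.succ Fin.succ
  have hD0 : D 0 = diagonal fun k => lam k.succ - lam 0 := by
    ext i j
    by_cases hij : i = j <;> simp [D, hA0, hΛ0, hij]
  have hDcont : ContinuousAt D 0 := continuousAt_pi.2 fun i => continuousAt_pi.2 fun j =>
    (hA _ _).continuousAt.sub (hΛ.mul continuousAt_const)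
  have hdet0 : (D 0).det ≠ 0 := by
    rw [hD0, det_diagonal, prod_ne_zero_iff]
    exact fun k _ => sub_ne_zero.2 (hsimple k)
  have hschur : ∀ᶠ t in 𝓝 0,
      A t 0 0 - Λ t = (fun k => A t 0 k.succ) ⬝ᵥ (D t)⁻¹ *ᵥ fun k => A t k.succ 0 := by
    filter_upwards [hΛeig, (continuous_id.matrix_det.continuousAt.comp hDcont).eventually_ne hdet0]
      with t ⟨v, hv, hAv⟩ hdet
    have := (A t - Λ t • 1).apply_zero_zero_eq_of_mulVec_eq_zero (isUnit_iff_ne_zero.2 hdet) hv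
      (by rw [sub_mulVec, smul_mulVec, one_mulVec, hAv, sub_self])
    simpa [one_apply, Fin.succ_ne_zero, (Fin.succ_ne_zero _).symm] using this
  have hDinv : (D 0)⁻¹ = diagonal fun k => (lam k.succ - lam 0)⁻¹ := by
    refine inv_eq_left_inv ?_
    rw [hD0, diagonal_mul_diagonal, ← diagonal_one]
    exact congrArg diagonal (funext fun k => inv_mul_cancel₀ (sub_ne_zero.2 (hsimple k)))
  have hDinv_cont : ContinuousAt (fun t => (D t)⁻¹) 0 :=
    (continuousAt_matrix_inv _ (by rw [Ring.inverse_eq_inv']; exact continuousAt_inv₀ hdet0)).comp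
      hDcont
  have hlim := tendsto_dotProduct_mulVec_div_sq
    (hasDerivAt_pi.2 fun k => (hA 0 k.succ).hasDerivAt)
    (hasDerivAt_pi.2 fun k => (hA k.succ 0).hasDerivAt)
    (by ext; simp [hA0, (Fin.succ_ne_zero _).symm]) (by ext; simp [hA0, Fin.succ_ne_zero])
    hDinv_cont
  rw [hDinv] at hlim
  convert hlim.congr' ?_ using 2
  · simp only [dotProduct, mulVec_diagonal]
    exact sum_congr rfl fun k _ => by ring
  · filter_upwards [nhdsWithin_le_nhds hschur] with t ht
    rw [ht]

theorem eigenvalue_perturbation_fin_succ {m : ℕ} {ε : ℝ} (hε : 0 < ε)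
    {A : ℝ → Matrix (Fin (m + 1)) (Fin (m + 1)) ℝ}
    (hA : ∀ i j, ContDiffOn ℝ 2 (fun t => A t i j) (ball 0 ε))
    (hsymm : ∀ t ∈ ball (0 : ℝ) ε, (A t).IsSymm)
    {lam : Fin (m + 1) → ℝ} (hA0 : A 0 = diagonal lam) (hsimple : ∀ k : Fin m, lam k.succ ≠ lam 0)
    {Λ : ℝ → ℝ} (hΛ : ContDiffOn ℝ 2 Λ (ball 0 ε))
    (hΛeig : ∀ t ∈ ball (0 : ℝ) ε, ∃ v, v ≠ 0 ∧ A t *ᵥ v = Λ t • v) (hΛ0 : Λ 0 = lam 0) :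
    deriv Λ 0 = deriv (fun t => A t 0 0) 0 ∧
      iteratedDeriv 2 Λ 0 = iteratedDeriv 2 (fun t => A t 0 0) 0 +
        2 * ∑ k : Fin m, deriv (fun t => A t 0 k.succ) 0 ^ 2 / (lam 0 - lam k.succ) := by
  have hball : ball (0 : ℝ) ε ∈ 𝓝 0 := ball_mem_nhds 0 hε
  have hAdiff : ∀ i j, DifferentiableAt ℝ (fun t => A t i j) 0 := fun i j =>
    ((hA i j).differentiableOn (by norm_num)).differentiableAt hball
  have hcol_eq_row : ∀ k : Fin m,
      deriv (fun t => A t k.succ 0) 0 = deriv (fun t => A t 0 k.succ) 0 := fun k =>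
    EventuallyEq.deriv_eq (by filter_upwards [hball] with t ht using (hsymm t ht).apply _ _)
  have hlim := tendsto_apply_zero_zero_sub_eigenvalue_div_sq hAdiff hA0 hsimple
    (hΛ.continuousOn.continuousAt hball) (eventually_of_mem hball hΛeig) hΛ0
  obtain ⟨hderiv, hderiv2⟩ :=
    deriv_eq_zero_and_iteratedDeriv_two_eq_of_tendsto_div_sq hε ((hA 0 0).sub hΛ) hlim
  rw [deriv_fun_sub (hAdiff 0 0) ((hΛ.differentiableOn (by norm_num)).differentiableAt hball)]
    at hderiv
  rw [iteratedDeriv_fun_sub ((hA 0 0).contDiffAt hball) (hΛ.contDiffAt hball)] at hderiv2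
  have hsum : ∑ k : Fin m, deriv (fun t => A t 0 k.succ) 0 * deriv (fun t => A t k.succ 0) 0 /
      (lam k.succ - lam 0) =
        -∑ k : Fin m, deriv (fun t => A t 0 k.succ) 0 ^ 2 / (lam 0 - lam k.succ) := by
    rw [← sum_neg_distrib]
    refine sum_congr rfl fun k _ => ?_
    rw [hcol_eq_row, ← neg_sub (lam k.succ), div_neg]
    ring
  constructor <;> linarith

/-- first and second derivatives of a simple eigenvalue of a C² family
of symmetric matrices. -/
theorem eigenvalue_perturbation (n : ℕ) (hn : 1 ≤ n) (ε : ℝ) (hε : 0 < ε)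
    (A : ℝ → Matrix (Fin n) (Fin n) ℝ)
    (hA : ∀ i j : Fin n, ContDiffOn ℝ 2 (fun t => A t i j) (ball (0 : ℝ) ε))
    (hsymm : ∀ t ∈ ball (0 : ℝ) ε, (A t).IsSymm)
    (lam : Fin n → ℝ) (hA0 : A 0 = Matrix.diagonal lam)
    (hsimple : ∀ k : Fin n, k ≠ ⟨0, by omega⟩ → lam k ≠ lam ⟨0, by omega⟩)
    (Λ : ℝ → ℝ) (hΛ : ContDiffOn ℝ 2 Λ (ball (0 : ℝ) ε))
    (hΛeig : ∀ t ∈ ball (0 : ℝ) ε, ∃ v : Fin n → ℝ, v ≠ 0 ∧ A t *ᵥ v = Λ t • v)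
    (hΛ0 : Λ 0 = lam ⟨0, by omega⟩) :
    deriv Λ 0 = deriv (fun t => A t ⟨0, by omega⟩ ⟨0, by omega⟩) 0 ∧
      iteratedDeriv 2 Λ 0 =
        iteratedDeriv 2 (fun t => A t ⟨0, by omega⟩ ⟨0, by omega⟩) 0 +
          2 * ∑ k ∈ Finset.univ.erase (⟨0, by omega⟩ : Fin n),
            (deriv (fun t => A t ⟨0, by omega⟩ k) 0) ^ 2 / (lam ⟨0, by omega⟩ - lam k) := by
  obtain ⟨m, rfl⟩ : ∃ m, n = m + 1 := ⟨n - 1, by omega⟩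
  have hsum (f : Fin (m + 1) → ℝ) : ∑ k ∈ univ.erase 0, f k = ∑ k : Fin m, f k.succ := by
    rw [← add_right_inj (f 0), add_sum_erase _ _ (mem_univ 0), Fin.sum_univ_succ]
  simpa [hsum] using eigenvalue_perturbation_fin_succ hε hA hsymm hA0
    (fun k => hsimple k.succ (Fin.succ_ne_zero k)) hΛ hΛeig hΛ0
end
end

section
/- Let u be a C³ solution of ∑_{i=1}^n arctan λᵢ(x) = ψ(x) on an open set Ω ⊂ ℝⁿ with ψ of class C¹. Let X(x) = (x, Du(x)) ∈ ℝⁿ×ℝⁿ and let J : ℝⁿ×ℝⁿ → ℝⁿ×ℝⁿ be the rotation J(a,b) = (−b,a). Then, applying the operator Δ_g componentwise to X, one has Δ_g X = J( ∑_{l,m} g^{lm} (∂_lψ) ∂_m X ) on Ω; that is, the mean curvature vector of the Lagrangian graph (x, Du(x)) equals J ∇_g ψ. -/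
open Real Metric Finset MeasureTheory Matrix

noncomputable section

/-!
Write `H = D²u` and `g = I + H²`. Where `H = P diag(λ) Pᵀ` with `P` orthogonal,
`det (I + iH) = ∏ (1 + iλⱼ) = ∏ √(1 + λⱼ²) · e^{iψ}`, so `ψ` is an argument of `det (I + iH)`.
Jacobi's formula and `(I + iH)⁻¹ = (I − iH) g⁻¹` turn this into `∂ₖψ = tr (g⁻¹ ∂ₖH)`, which by
the symmetry of the third derivatives of `u` is the second-order part of `Δ_g (∂ₖu)`; the
first-order part is then handled by `H g⁻¹ H = I − g⁻¹`. For the coordinate functions only the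
first-order part survives, and `g⁻¹ H` is symmetric because `H` commutes with `g`.
-/

open Filter Topology

theorem Matrix.hasFDerivAt_det {𝕜 𝔸 E ι : Type*} [NontriviallyNormedField 𝕜] [NormedCommRing 𝔸]
    [NormedAlgebra 𝕜 𝔸] [NormedAddCommGroup E] [NormedSpace 𝕜 E] [Fintype ι] [DecidableEq ι]
    {M : E → Matrix ι ι 𝔸} {M' : ι → ι → E →L[𝕜] 𝔸} {x : E}
    (hM : ∀ i j, HasFDerivAt (fun y => M y i j) (M' i j) x) :
    HasFDerivAt (fun y => (M y).det) (∑ i, ∑ j, (M x).adjugate i j • M' j i) x := by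
  have hexp := HasFDerivAt.fun_sum (u := univ) fun (σ : Equiv.Perm ι) _ =>
    (HasFDerivAt.finsetProd (u := univ) fun i _ => hM (σ i) i).const_mul
      ((Equiv.Perm.sign σ : ℤ) : 𝔸)
  simp only [← det_apply'] at hexp
  refine hexp.congr_fderiv (ContinuousLinearMap.ext fun v => ?_)
  have hcol : ∀ i, ∑ j, (M x).adjugate i j * M' j i v
      = ((M x).updateCol i fun p => M' p i v).det := by
    intro i
    rw [← cramer_apply, cramer_eq_adjugate_mulVec]
    rfl
  simp only [_root_.sum_apply, _root_.smul_apply, smul_eq_mul, hcol, det_apply']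
  rw [Finset.sum_comm]
  refine Finset.sum_congr rfl fun σ _ => ?_
  rw [Finset.mul_sum]
  refine Finset.sum_congr rfl fun i _ => ?_
  rw [← Finset.mul_prod_erase univ _ (mem_univ i),
    Finset.prod_congr rfl fun j hj => updateCol_ne (Finset.ne_of_mem_erase hj)]
  simp only [updateCol_self]
  ring

theorem Complex.im_div_eq_of_hasFDerivAt_of_eventuallyEq_mul_exp {E : Type*} [NormedAddCommGroup E]
    [NormedSpace ℝ E] {f : E → ℂ} {f' : E →L[ℝ] ℂ} {r θ : E → ℝ} {θ' : E →L[ℝ] ℝ} {x : E}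
    (hf : HasFDerivAt f f' x) (hθ : HasFDerivAt θ θ' x)
    (hpolar : ∀ᶠ y in 𝓝 x, f y = r y * exp (θ y * I)) (hr : r x ≠ 0) (v : E) :
    (f' v / f x).im = θ' v := by
  have hphase := ((ofRealCLM.hasFDerivAt.comp x hθ).mul_const I).neg.cexp
  have hreal : HasFDerivAt (fun y => (f y * exp (-(ofRealCLM (θ y) * I))).im)
      (0 : E →L[ℝ] ℝ) x := by
    refine (hasFDerivAt_const (0 : ℝ) x).congr_of_eventuallyEq ?_
    filter_upwards [hpolar] with y hy
    rw [hy, ofRealCLM_apply, mul_assoc, ← exp_add, add_neg_cancel, exp_zero, mul_one, ofReal_im]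
  have hv := congrArg (· v) ((imCLM.hasFDerivAt.comp x (hf.mul hphase)).unique hreal)
  have hfx : f x = r x * exp (θ x * I) := hpolar.self_of_nhds
  have hfx0 : f x ≠ 0 := by rw [hfx]; exact mul_ne_zero (mod_cast hr) (exp_ne_zero _)
  have hderotate : f x * exp (-(θ x * I)) = r x := by
    rw [hfx, mul_assoc, ← exp_add, add_neg_cancel, exp_zero, mul_one]
  have him : (r x * (f' v / f x - θ' v * I)).im = 0 := by
    simp only [ContinuousLinearMap.comp_apply, _root_.add_apply, _root_.smul_apply,
      _root_.neg_apply, _root_.zero_apply, Function.comp_apply, Pi.neg_apply, imCLM_apply,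
      ofRealCLM_apply, smul_eq_mul] at hv
    rw [← hv, ← hderotate]
    congr 1
    field_simp
    ring
  rw [im_ofReal_mul, sub_im, mul_I_im, ofReal_re] at him
  exact sub_eq_zero.mp ((mul_eq_zero.mp him).resolve_left hr)

section OneAddMulSelf

variable {ι : Type*} [Fintype ι] [DecidableEq ι] {H : Matrix ι ι ℝ}

theorem Matrix.IsSymm.isUnit_det_one_add_mul_self (hH : H.IsSymm) : IsUnit (1 + H * H).det := by
  have hpos : (1 + Hᴴ * H).PosDef :=
    PosDef.one.add_posSemidef (posSemidef_conjTranspose_mul_self H)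
  rw [conjTranspose_eq_transpose_of_trivial, hH.eq] at hpos
  exact (isUnit_iff_isUnit_det _).mp hpos.isUnit

theorem Matrix.IsSymm.inv_one_add_mul_self (hH : H.IsSymm) : ((1 + H * H)⁻¹).IsSymm := by
  rw [IsSymm, transpose_nonsing_inv, transpose_add, transpose_one, transpose_mul, hH.eq]

theorem Matrix.IsSymm.commute_inv_one_add_mul_self (hH : H.IsSymm) :
    Commute H (1 + H * H)⁻¹ := by
  set g := 1 + H * H
  have hcomm : H * g = g * H :=
    ((Commute.one_right H).add_right ((Commute.refl H).mul_right (Commute.refl H))).eq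
  have hunit := hH.isUnit_det_one_add_mul_self
  calc H * g⁻¹ = g⁻¹ * g * H * g⁻¹ := by rw [nonsing_inv_mul _ hunit, Matrix.one_mul]
    _ = g⁻¹ * (H * g) * g⁻¹ := by rw [hcomm]; simp only [Matrix.mul_assoc]
    _ = g⁻¹ * H := by
        rw [Matrix.mul_assoc, Matrix.mul_assoc, mul_nonsing_inv _ hunit, Matrix.mul_one]

theorem Matrix.IsSymm.mul_inv_one_add_mul_self_mul (hH : H.IsSymm) :
    H * (1 + H * H)⁻¹ * H = 1 - (1 + H * H)⁻¹ := by
  rw [(hH.commute_inv_one_add_mul_self).eq, Matrix.mul_assoc, eq_sub_iff_add_eq,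
    ← mul_add_one, add_comm (H * H), nonsing_inv_mul _ hH.isUnit_det_one_add_mul_self]

end OneAddMulSelf

theorem Matrix.det_one_add_smul_conj_diagonal {R ι : Type*} [CommRing R] [Fintype ι]
    [DecidableEq ι] {P : Matrix ι ι R} (hP : P * Pᵀ = 1) (c : R) (d : ι → R) :
    det (1 + c • (P * diagonal d * Pᵀ)) = ∏ i, (1 + c * d i) := by
  have hconj : 1 + c • (P * diagonal d * Pᵀ) = P * diagonal (fun i => 1 + c * d i) * Pᵀ := by
    calc 1 + c • (P * diagonal d * Pᵀ) = P * (1 + c • diagonal d) * Pᵀ := by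
          rw [Matrix.mul_add, Matrix.add_mul, Matrix.mul_one, hP, Matrix.mul_smul, Matrix.smul_mul]
      _ = P * diagonal (fun i => 1 + c * d i) * Pᵀ := by
          rw [← diagonal_one, ← diagonal_smul, diagonal_add]
          rfl
  calc det (1 + c • (P * diagonal d * Pᵀ))
      = det (P * Pᵀ) * det (diagonal fun i => 1 + c * d i) := by
        rw [hconj, det_mul, det_mul, det_mul]; ring
    _ = ∏ i, (1 + c * d i) := by rw [hP, det_one, one_mul, det_diagonal]

section ComplexPolar

open Complex

variable {ι : Type*} [Fintype ι] [DecidableEq ι] {H : Matrix ι ι ℝ}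

theorem Matrix.IsSymm.inv_one_add_I_smul (hH : H.IsSymm) :
    (1 + I • H.map ofRealHom)⁻¹ = (1 - I • H.map ofRealHom) * ((1 + H * H)⁻¹).map ofRealHom := by
  refine inv_eq_right_inv ?_
  have hsq : (1 + I • H.map ofRealHom) * (1 - I • H.map ofRealHom) = (1 + H * H).map ofRealHom := by
    simp only [mul_sub, add_mul, Matrix.one_mul, Matrix.mul_one, Matrix.smul_mul, Matrix.mul_smul,
      smul_smul, I_mul_I, neg_one_smul]
    rw [Matrix.map_add _ (map_add _), Matrix.map_one _ (map_zero _) (map_one _), Matrix.map_mul]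
    abel
  rw [← Matrix.mul_assoc, hsq, ← Matrix.map_mul, mul_nonsing_inv _ hH.isUnit_det_one_add_mul_self]
  exact Matrix.map_one _ (map_zero _) (map_one _)

theorem Matrix.IsSymm.im_trace_inv_one_add_I_smul_mul (hH : H.IsSymm) (B : Matrix ι ι ℝ) :
    (trace ((1 + I • H.map ofRealHom)⁻¹ * (I • B.map ofRealHom))).im =
      trace ((1 + H * H)⁻¹ * B) := by
  have hsplit : (1 + I • H.map ofRealHom)⁻¹ * (I • B.map ofRealHom)
      = I • ((1 + H * H)⁻¹ * B).map ofRealHom + (H * (1 + H * H)⁻¹ * B).map ofRealHom := by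
    rw [hH.inv_one_add_I_smul, sub_mul, sub_mul, Matrix.one_mul, Matrix.smul_mul, Matrix.smul_mul,
      Matrix.mul_smul, Matrix.mul_smul, smul_smul, I_mul_I, neg_one_smul, sub_neg_eq_add,
      Matrix.map_mul, Matrix.map_mul, Matrix.map_mul]
  rw [hsplit, trace_add, trace_smul, ← AddMonoidHom.map_trace, ← AddMonoidHom.map_trace]
  simp

theorem Complex.one_add_mul_I_eq_sqrt_mul_exp_arctan (t : ℝ) :
    (1 + t * I : ℂ) = √(1 + t ^ 2) * exp (Real.arctan t * I) := by
  have hs : (√(1 + t ^ 2) : ℂ) ≠ 0 := by exact_mod_cast (Real.sqrt_pos.mpr (by positivity)).ne'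
  rw [exp_mul_I, ← ofReal_cos, ← ofReal_sin, Real.cos_arctan, Real.sin_arctan]
  push_cast
  field_simp

theorem Matrix.det_one_add_I_smul_eq_mul_exp {P : Matrix ι ι ℝ} {d : ι → ℝ} (hP : P * Pᵀ = 1)
    (hH : H = P * diagonal d * Pᵀ) :
    det (1 + I • H.map ofRealHom) =
      ((∏ i, √(1 + d i ^ 2) : ℝ) : ℂ) * exp ((∑ i, Real.arctan (d i) : ℝ) * I) := by
  have hPc : P.map ofRealHom * (P.map ofRealHom)ᵀ = 1 := by
    rw [← transpose_map, ← Matrix.map_mul, hP, Matrix.map_one _ (map_zero _) (map_one _)]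
  have hHc : H.map ofRealHom =
      P.map ofRealHom * diagonal (fun i => (d i : ℂ)) * (P.map ofRealHom)ᵀ := by
    rw [hH, Matrix.map_mul, Matrix.map_mul, transpose_map, diagonal_map (map_zero _)]
    rfl
  rw [hHc, det_one_add_smul_conj_diagonal hPc]
  rw [ofReal_prod, ofReal_sum, Finset.sum_mul, Complex.exp_sum, ← Finset.prod_mul_distrib]
  refine Finset.prod_congr rfl fun i _ => ?_
  rw [mul_comm I, one_add_mul_I_eq_sqrt_mul_exp_arctan]

end ComplexPolar

section PartialDerivatives

variable {n : ℕ} {f : ES n → ℝ} {x : ES n}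

theorem pd2_eq_hess (i j : Fin n) : pd2 n f x i j = Hess n f x i j := rfl

theorem pd2_eq_pd1_pd1 (hf : DifferentiableAt ℝ (fderiv ℝ f) x) (i j : Fin n) :
    pd2 n f x i j = pd1 n (fun y => pd1 n f y j) x i := by
  simp only [pd2, pd1, iteratedFDeriv_two_apply, Matrix.cons_val_zero, Matrix.cons_val_one]
  rw [fderiv_clm_apply hf (differentiableAt_const _)]
  simp

theorem pd2_comm (hf : ContDiffAt ℝ 2 f x) (i j : Fin n) : pd2 n f x i j = pd2 n f x j i := by
  simp only [pd2, iteratedFDeriv_two_apply]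
  simpa using hf.isSymmSndFDerivAt (by simp) (evec n i) (evec n j)

theorem isSymm_hess (hf : ContDiffAt ℝ 2 f x) : (Hess n f x).IsSymm := by
  ext i j
  exact pd2_comm hf j i

theorem pd3_eq_pd1_pd2 (hf : DifferentiableAt ℝ (iteratedFDeriv ℝ 2 f) x) (i j k : Fin n) :
    pd3 n f x i j k = pd1 n (fun y => pd2 n f y j k) x i := by
  simp only [pd3, pd2, pd1]
  rw [iteratedFDeriv_succ_apply_left,
    (hf.hasFDerivAt.continuousMultilinear_apply_const ![evec n j, evec n k]).fderiv]
  congr 1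

theorem pd3_comm_23 (hf : ContDiffAt ℝ 3 f x) (i j k : Fin n) :
    pd3 n f x i j k = pd3 n f x i k j := by
  have hdiff := (hf.iteratedFDeriv_right (m := 1) (i := 2) (by norm_num)).differentiableAt
    one_ne_zero
  rw [pd3_eq_pd1_pd2 hdiff, pd3_eq_pd1_pd2 hdiff, pd1, pd1, Filter.EventuallyEq.fderiv_eq]
  filter_upwards [(hf.of_le (by norm_num : (2 : WithTop ℕ∞) ≤ 3)).eventually (by simp)]
    with y hy
  exact pd2_comm hy j k

theorem pd2_pd1_eq_pd3 (hf : ContDiffAt ℝ 3 f x) (i j k : Fin n) :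
    pd2 n (fun y => pd1 n f y k) x i j = pd3 n f x i j k := by
  have hcomp := (ContinuousLinearMap.apply ℝ ℝ (evec n k)).iteratedFDeriv_comp_left
    (hf.fderiv_right (m := 2) (by norm_num)) (i := 2) le_rfl
  have hinit : Fin.init ![evec n i, evec n j, evec n k] = ![evec n i, evec n j] := by
    funext l
    fin_cases l <;> rfl
  rw [pd3, iteratedFDeriv_succ_apply_right (n := 2), hinit]
  exact congrArg (· ![evec n i, evec n j]) hcomp

theorem pd3_comm_12 (hf : ContDiffAt ℝ 3 f x) (i j k : Fin n) :
    pd3 n f x i j k = pd3 n f x j i k := by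
  have hfk : ContDiffAt ℝ 2 (fun y => pd1 n f y k) x :=
    (hf.fderiv_right (m := 2) (by norm_num)).clm_apply contDiffAt_const
  rw [← pd2_pd1_eq_pd3 hf, ← pd2_pd1_eq_pd3 hf, pd2_comm hfk]

theorem pd3_comm_13 (hf : ContDiffAt ℝ 3 f x) (i j k : Fin n) :
    pd3 n f x i j k = pd3 n f x k j i := by
  rw [pd3_comm_12 hf, pd3_comm_23 hf, pd3_comm_12 hf]

theorem pd1_coord (k : Fin n) : (fun j => pd1 n (fun y => y k) x j) = Pi.single k 1 := by
  funext j
  rw [pd1, show (fun y : ES n => y k) = EuclideanSpace.proj k from rfl,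
    ContinuousLinearMap.fderiv]
  simp [evec, Pi.single_apply, eq_comm]

theorem pd2_coord (k i j : Fin n) : pd2 n (fun y => y k) x i j = 0 := by
  have hfderiv : fderiv ℝ (fun y : ES n => y k) = fun _ => EuclideanSpace.proj k :=
    funext fun _ => (EuclideanSpace.proj (𝕜 := ℝ) k : ES n →L[ℝ] ℝ).fderiv
  rw [pd2_eq_pd1_pd1 (hfderiv ▸ differentiableAt_const _), pd1]
  simp only [fun y => congrFun (pd1_coord (x := y) k) j, fderiv_fun_const, Pi.zero_apply,
    _root_.zero_apply]

end PartialDerivatives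

section LaplaceBeltrami

variable {n : ℕ} {u ψ : ES n → ℝ} {x : ES n}

open Complex in
theorem pd1_eq_trace_ginv_mul_pd3 {lam : ES n → Fin n → ℝ} {s : Set (ES n)} (hs : s ∈ 𝓝 x)
    (hu : ContDiffAt ℝ 3 u x) (hψ : DifferentiableAt ℝ ψ x) (heig : HessEig n u lam s)
    (hphase : ∀ y ∈ s, ∑ i, Real.arctan (lam y i) = ψ y) (k : Fin n) :
    pd1 n ψ x k = trace (ginv n u x * of fun p q => pd3 n u x k p q) := by
  set M : ES n → Matrix (Fin n) (Fin n) ℂ := fun y => 1 + I • (Hess n u y).map ofRealHom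
  have hpolar : ∀ᶠ y in 𝓝 x, det (M y) =
      ((∏ i, √(1 + lam y i ^ 2) : ℝ) : ℂ) * cexp (ψ y * I) := by
    filter_upwards [hs] with y hy
    obtain ⟨P, hP, hH⟩ := heig y hy
    rw [det_one_add_I_smul_eq_mul_exp hP hH, hphase y hy]
  have hdiff := (hu.iteratedFDeriv_right (m := 1) (i := 2) (by norm_num)).differentiableAt
    one_ne_zero
  have hentry : ∀ p q, HasFDerivAt (fun y => M y p q)
      (I • ofRealCLM.comp (fderiv ℝ (fun y => pd2 n u y p q) x)) x := by
    intro p q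
    have hpd2 : DifferentiableAt ℝ (fun y => pd2 n u y p q) x :=
      (hdiff.hasFDerivAt.continuousMultilinear_apply_const _).differentiableAt
    refine (((ofRealCLM.hasFDerivAt.comp x hpd2.hasFDerivAt).const_mul I).const_add
      ((1 : Matrix (Fin n) (Fin n) ℂ) p q)).congr_of_eventuallyEq (.of_forall fun y => ?_)
    simp [M, Hess, pd2]
  have hr : ∏ i, √(1 + lam x i ^ 2) ≠ 0 :=
    Finset.prod_ne_zero_iff.mpr fun i _ => (Real.sqrt_pos.mpr (by positivity)).ne'
  have him := im_div_eq_of_hasFDerivAt_of_eventuallyEq_mul_exp (hasFDerivAt_det hentry)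
    hψ.hasFDerivAt hpolar hr (evec n k)
  have hval : ∀ p q, fderiv ℝ (fun y => pd2 n u y p q) x (evec n k) = pd3 n u x k p q :=
    fun p q => (pd3_eq_pd1_pd2 hdiff k p q).symm
  rw [ginv, ← (isSymm_hess (hu.of_le (by norm_num))).im_trace_inv_one_add_I_smul_mul, pd1, ← him]
  congr 1
  rw [inv_def (M x), Ring.inverse_eq_inv']
  simp only [_root_.sum_apply, _root_.smul_apply, ContinuousLinearMap.comp_apply, ofRealCLM_apply,
    hval, trace, diag_apply, mul_apply, Matrix.smul_apply, map_apply, of_apply,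
    smul_eq_mul, ofRealHom_eq_coe, Finset.sum_div]
  refine Finset.sum_congr rfl fun i _ => Finset.sum_congr rfl fun j _ => ?_
  field_simp

theorem isSymm_ginv (hu : ContDiffAt ℝ 2 u x) : (ginv n u x).IsSymm :=
  (isSymm_hess hu).inv_one_add_mul_self

theorem commute_hess_ginv (hu : ContDiffAt ℝ 2 u x) : Commute (Hess n u x) (ginv n u x) :=
  (isSymm_hess hu).commute_inv_one_add_mul_self

theorem hess_mul_ginv_mul_hess (hu : ContDiffAt ℝ 2 u x) :
    Hess n u x * ginv n u x * Hess n u x = 1 - ginv n u x :=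
  (isSymm_hess hu).mul_inv_one_add_mul_self_mul

theorem deltaG_eq_sub_dotProduct (f : ES n → ℝ) :
    DeltaG n u ψ f x = (∑ i, ∑ j, ginv n u x i j * pd2 n f x i j) -
      (fun j => pd1 n f x j) ⬝ᵥ ((ginv n u x * Hess n u x) *ᵥ fun q => pd1 n ψ x q) := by
  simp only [DeltaG, dotProduct, mulVec, mul_apply, Finset.mul_sum, Finset.sum_mul]
  congr 1
  refine Finset.sum_congr rfl fun j _ => ?_
  rw [Finset.sum_comm]
  refine Finset.sum_congr rfl fun p _ => Finset.sum_congr rfl fun q _ => ?_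
  rw [pd2_eq_hess]
  ring

theorem deltaG_coord (hu : ContDiffAt ℝ 2 u x) (k : Fin n) :
    DeltaG n u ψ (fun y => y k) x =
      -(∑ l, ∑ m, ginv n u x l m * pd1 n ψ x l * pd2 n u x m k) := by
  have hH := isSymm_hess hu
  have hGH : (ginv n u x * Hess n u x)ᵀ = ginv n u x * Hess n u x := by
    rw [transpose_mul, hH.eq, (isSymm_ginv hu).eq, (commute_hess_ginv hu).eq]
  rw [deltaG_eq_sub_dotProduct, pd1_coord, single_dotProduct, one_mul, ← hGH, mulVec_transpose]
  simp only [pd2_coord, mul_zero, Finset.sum_const_zero, zero_sub, vecMul, dotProduct, mul_apply,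
    Finset.mul_sum]
  congr 1
  refine Finset.sum_congr rfl fun l _ => Finset.sum_congr rfl fun m _ => ?_
  rw [pd2_eq_hess]
  ring

theorem deltaG_pd1 (hu : ContDiffAt ℝ 3 u x)
    (hψ : ∀ k, pd1 n ψ x k = trace (ginv n u x * of fun p q => pd3 n u x k p q)) (k : Fin n) :
    DeltaG n u ψ (fun y => pd1 n u y k) x = ∑ l, ginv n u x l k * pd1 n ψ x l := by
  have hu2 : ContDiffAt ℝ 2 u x := hu.of_le (by norm_num)
  have hH := isSymm_hess hu2
  have hlaplace :
      ∑ i, ∑ j, ginv n u x i j * pd2 n (fun y => pd1 n u y k) x i j = pd1 n ψ x k := by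
    simp only [hψ k, trace, diag_apply, mul_apply, of_apply, pd2_pd1_eq_pd3 hu,
      pd3_comm_13 hu _ _ k]
  have hgrad : (fun j => pd1 n (fun y => pd1 n u y k) x j) = fun j => Hess n u x k j := by
    funext j
    rw [← pd2_eq_pd1_pd1 ((hu.fderiv_right (m := 1) (by norm_num)).differentiableAt one_ne_zero),
      pd2_eq_hess, hH.apply]
  have hHGH : (fun j => Hess n u x k j) ⬝ᵥ ((ginv n u x * Hess n u x) *ᵥ fun q => pd1 n ψ x q) =
      ((Hess n u x * ginv n u x * Hess n u x) *ᵥ fun q => pd1 n ψ x q) k := by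
    conv_rhs => rw [Matrix.mul_assoc, ← mulVec_mulVec]
    rfl
  rw [deltaG_eq_sub_dotProduct, hlaplace, hgrad, hHGH, hess_mul_ginv_mul_hess hu2,
    sub_mulVec, one_mulVec, Pi.sub_apply, sub_sub_cancel, mulVec, dotProduct]
  refine Finset.sum_congr rfl fun l _ => ?_
  rw [(isSymm_ginv hu2).apply, mul_comm]

end LaplaceBeltrami

/-- Componentwise: the first `n` components of `J (∑ gˡᵐ ψ_l ∂_m X)` are `−∑ gˡᵐ ψ_l u_{mk}`
and the last `n` are `∑ gˡᵐ ψ_l δ_{mk} = ∑ gˡᵏ ψ_l`. -/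
theorem mean_curvature_formula (n : ℕ) (Ω : Set (ES n)) (hΩ : IsOpen Ω)
    (u ψ : ES n → ℝ) (lamF : ES n → Fin n → ℝ)
    (hu : ContDiffOn ℝ 3 u Ω) (hψ : ContDiffOn ℝ 1 ψ Ω)
    (heig : HessEig n u lamF Ω)
    (heq : ∀ x ∈ Ω, ∑ i, Real.arctan (lamF x i) = ψ x) :
    ∀ x ∈ Ω, ∀ k : Fin n,
      DeltaG n u ψ (fun y => y k) x =
          -(∑ l, ∑ m, ginv n u x l m * pd1 n ψ x l * pd2 n u x m k) ∧
        DeltaG n u ψ (fun y => fderiv ℝ u y (evec n k)) x =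
          ∑ l, ginv n u x l k * pd1 n ψ x l := by
  intro x hx k
  have hu3 : ContDiffAt ℝ 3 u x := hu.contDiffAt (hΩ.mem_nhds hx)
  have hψx : DifferentiableAt ℝ ψ x :=
    (hψ.contDiffAt (hΩ.mem_nhds hx)).differentiableAt one_ne_zero
  exact ⟨deltaG_coord (hu3.of_le (by norm_num)) k,
    deltaG_pd1 hu3 (pd1_eq_trace_ginv_mul_pd3 (hΩ.mem_nhds hx) hu3 hψx heig heq) k⟩
end
end
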